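/- arXiv:2302.00488 — 5 statements merged into one kernel-verified Lean document; each statement's English description precedes it below -/
import Mathlib

section
/- Let A and B be real numbers with 0 ≤ A ≤ 16, −8 ≤ B ≤ 8 and A + B > 16, and set μ* := √((A+B−16)/(A−B)). Then for every μ with 0 < μ < μ*, one has μ < F(μ) < μ*. -/
/-- `F A B μ = (μ/16)·(A + B − μ²·(A − B))`. -/
noncomputable def F (A B μ : ℝ) : ℝ := μ / 16 * (A + B - μ ^ 2 * (A - B))

/-- If `0 ≤ A ≤ 16`, `−8 ≤ B ≤ 8` and `A + B > 16`, then for every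
`0 < μ < μ* := √((A+B−16)/(A−B))`, one has `μ < F(μ) < μ*`. -/
theorem stmt_2 (A B : ℝ) (hA0 : 0 ≤ A) (hA : A ≤ 16) (hB0 : -8 ≤ B) (hB : B ≤ 8)
    (hAB : A + B > 16) (μ : ℝ) (hμ0 : 0 < μ)
    (hμ : μ < Real.sqrt ((A + B - 16) / (A - B))) :
    μ < F A B μ ∧ F A B μ < Real.sqrt ((A + B - 16) / (A - B)) := by
  set t := Real.sqrt ((A + B - 16) / (A - B)) with ht
  have hc : 0 < A - B := by linarith
  have hnum : 0 < A + B - 16 := by linarith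
  have hdiv : 0 < (A + B - 16) / (A - B) := div_pos hnum hc
  have ht0 : 0 < t := Real.sqrt_pos.mpr hdiv
  have ht2 : t ^ 2 = (A + B - 16) / (A - B) := Real.sq_sqrt hdiv.le
  have hct : (A - B) * t ^ 2 = A + B - 16 := by
    rw [ht2]; field_simp
  have hμt2 : μ ^ 2 < t ^ 2 := by
    nlinarith
  constructor
  · unfold F
    nlinarith [mul_lt_mul_of_pos_left hμt2 hc, mul_pos hμ0 hnum]
  · unfold F
    have hfac : 16 * t - μ * ((A + B) - (A - B) * μ ^ 2) =
        (t - μ) * ((A + B) - (A - B) * (t ^ 2 + t * μ + μ ^ 2)) := by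
      have : 16 * t = t * ((A + B) - (A - B) * t ^ 2) := by
        rw [hct]; ring
      rw [this]; ring
    nlinarith [mul_pos (sub_pos.mpr hμ)
        (show 0 < (A + B) - (A - B) * (t ^ 2 + t * μ + μ ^ 2) by
          nlinarith [mul_pos ht0 hμ0, mul_lt_mul_of_pos_left hμt2 hc,
            mul_lt_mul_of_pos_left (mul_lt_mul_of_pos_left hμ ht0) hc])]
end

section
/- Let A and B be real numbers with 0 ≤ A ≤ 16, −8 ≤ B ≤ 8 and A + B > 16, and set μ* := √((A+B−16)/(A−B)). For any μ₀ with 0 < μ₀ < μ*, the sequence defined by μ_{k+1} = F(μ_k) is strictly increasing and converges to μ*. -/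
open Set Filter Topology

section Orbit

variable {f : ℝ → ℝ} {a m : ℝ} {u : ℕ → ℝ}

theorem orbit_mem_of_mapsTo {s : Set ℝ} (hmaps : MapsTo f s s) (hu0 : u 0 ∈ s)
    (hu : ∀ k, u (k + 1) = f (u k)) (k : ℕ) : u k ∈ s := by
  induction k with
  | zero => exact hu0
  | succ k ih => exact hu k ▸ hmaps ih

theorem strictMono_tendsto_of_mapsTo_Ioo (hf : ContinuousOn f (Ioo a m))
    (hmaps : MapsTo f (Ioo a m) (Ioo a m)) (hlt : ∀ x ∈ Ioo a m, x < f x)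
    (hu0 : u 0 ∈ Ioo a m) (hu : ∀ k, u (k + 1) = f (u k)) :
    StrictMono u ∧ Tendsto u atTop (𝓝 m) := by
  have hmem := orbit_mem_of_mapsTo hmaps hu0 hu
  have hmono : StrictMono u := strictMono_nat_of_lt_succ fun k => hu k ▸ hlt _ (hmem k)
  refine ⟨hmono, ?_⟩
  have hbdd : BddAbove (range u) := ⟨m, forall_mem_range.2 fun k => (hmem k).2.le⟩
  have hlim : Tendsto u atTop (𝓝 (⨆ k, u k)) := tendsto_atTop_ciSup hmono.monotone hbdd
  set L := ⨆ k, u k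
  have hLm : L ≤ m := ciSup_le fun k => (hmem k).2.le
  have haL : a < L := (hmem 0).1.trans_le (le_ciSup hbdd 0)
  suffices L = m by rwa [this] at hlim
  by_contra hne
  have hL : L ∈ Ioo a m := ⟨haL, hLm.lt_of_ne hne⟩
  have hfix : f L = L := by
    have hcomp : f ∘ u = fun k => u (k + 1) := funext fun k => (hu k).symm
    exact tendsto_nhds_unique
      (hcomp ▸ (hf.continuousAt (isOpen_Ioo.mem_nhds hL)).tendsto.comp hlim)
      ((tendsto_add_atTop_iff_nat 1).2 hlim)
  exact (hlt L hL).ne' hfix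

end Orbit

section Iteration

variable {A B m μ : ℝ}

theorem F_eq_add (hm : m ^ 2 * (A - B) = A + B - 16) :
    F A B μ = μ + μ * (A - B) * (m ^ 2 - μ ^ 2) / 16 := by
  unfold F
  linear_combination -μ / 16 * hm

theorem lt_F (hAB : 0 < A - B) (hm : m ^ 2 * (A - B) = A + B - 16) (hμ0 : 0 < μ)
    (hμm : μ < m) : μ < F A B μ := by
  rw [F_eq_add hm, lt_add_iff_pos_right]
  have : 0 < m ^ 2 - μ ^ 2 := sub_pos.2 (pow_lt_pow_left₀ hμm hμ0.le two_ne_zero)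
  positivity

theorem F_lt (hAB : 0 < A - B) (h24 : A + B ≤ 24) (hm : m ^ 2 * (A - B) = A + B - 16)
    (hμ0 : 0 < μ) (hμm : μ < m) : F A B μ < m := by
  have hsmall : μ * (A - B) * (m + μ) < 16 :=
    calc μ * (A - B) * (m + μ) < μ * (A - B) * (m + m) := by gcongr
      _ < m * (A - B) * (m + m) := by gcongr; linarith
      _ = 2 * (A + B - 16) := by linear_combination 2 * hm
      _ ≤ 16 := by linarith
  have hfactor : m - F A B μ = (m - μ) * (1 - μ * (A - B) * (m + μ) / 16) := by
    rw [F_eq_add hm]; ring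
  have hgap : 0 < m - F A B μ := by
    rw [hfactor]
    exact mul_pos (sub_pos.2 hμm) (by linarith)
  linarith

theorem mapsTo_F_Ioo (hAB : 0 < A - B) (h24 : A + B ≤ 24)
    (hm : m ^ 2 * (A - B) = A + B - 16) : MapsTo (F A B) (Ioo 0 m) (Ioo 0 m) :=
  fun _ ⟨hμ0, hμm⟩ => ⟨hμ0.trans (lt_F hAB hm hμ0 hμm), F_lt hAB h24 hm hμ0 hμm⟩

end Iteration

theorem stmt_5_general (A B : ℝ) (hA : A ≤ 16) (hB : B ≤ 8)
    (hAB : A + B > 16) (μ₀ : ℝ) (hμ0 : 0 < μ₀)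
    (hμ : μ₀ < Real.sqrt ((A + B - 16) / (A - B)))
    (u : ℕ → ℝ) (hu0 : u 0 = μ₀) (hrec : ∀ k, u (k + 1) = F A B (u k)) :
    StrictMono u ∧
    Filter.Tendsto u Filter.atTop (nhds (Real.sqrt ((A + B - 16) / (A - B)))) := by
  set m := Real.sqrt ((A + B - 16) / (A - B))
  have hpos : 0 < A - B := by linarith
  have hm : m ^ 2 * (A - B) = A + B - 16 := by
    rw [Real.sq_sqrt (div_nonneg (by linarith) hpos.le), div_mul_cancel₀ _ hpos.ne']
  have hcont : ContinuousOn (F A B) (Ioo 0 m) := by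
    unfold F
    fun_prop
  exact strictMono_tendsto_of_mapsTo_Ioo hcont (mapsTo_F_Ioo hpos (by linarith) hm)
    (fun _ hx => lt_F hpos hm hx.1 hx.2) (hu0 ▸ ⟨hμ0, hμ⟩) hrec

/-- If `0 ≤ A ≤ 16`, `−8 ≤ B ≤ 8` and `A + B > 16`, then for any starting point
`0 < μ₀ < μ* := √((A+B−16)/(A−B))`, the sequence defined by `μ_{k+1} = F(μ_k)`
is strictly increasing and converges to `μ*`. -/
theorem stmt_5 (A B : ℝ) (hA0 : 0 ≤ A) (hA : A ≤ 16) (hB0 : -8 ≤ B) (hB : B ≤ 8)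
    (hAB : A + B > 16) (μ₀ : ℝ) (hμ0 : 0 < μ₀)
    (hμ : μ₀ < Real.sqrt ((A + B - 16) / (A - B)))
    (u : ℕ → ℝ) (hu0 : u 0 = μ₀) (hrec : ∀ k, u (k + 1) = F A B (u k)) :
    StrictMono u ∧
    Filter.Tendsto u Filter.atTop (nhds (Real.sqrt ((A + B - 16) / (A - B)))) :=
  stmt_5_general A B hA hB hAB μ₀ hμ0 hμ u hu0 hrec
end

section
/- Let A and B be real numbers with 0 ≤ A ≤ 16, −8 ≤ B ≤ 8 and A + B > 16, and set μ* := √((A+B−16)/(A−B)). Then μ* > 0 and there exists p > 1/2 (namely p = (1 + μ*/2)/2, depending only on A and B) such that for every μ₀ with 0 < μ₀ < μ*, the sequence defined by μ_{k+1} = F(μ_k) satisfies (1 + μ_k)/2 ≥ p for some index k. -/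
/-- If `0 ≤ A ≤ 16`, `−8 ≤ B ≤ 8` and `A + B > 16`, then
`μ* := √((A+B−16)/(A−B)) > 0` and `p := (1 + μ*/2)/2 > 1/2` is such that for
every `0 < μ₀ < μ*`, the sequence `μ_{k+1} = F(μ_k)` satisfies
`(1 + μ_k)/2 ≥ p` for some index `k`. -/
theorem stmt_6 (A B : ℝ) (hA0 : 0 ≤ A) (hA : A ≤ 16) (hB0 : -8 ≤ B) (hB : B ≤ 8)
    (hAB : A + B > 16) :
    0 < Real.sqrt ((A + B - 16) / (A - B)) ∧
    (1 + Real.sqrt ((A + B - 16) / (A - B)) / 2) / 2 > 1 / 2 ∧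
    ∀ μ₀ : ℝ, 0 < μ₀ → μ₀ < Real.sqrt ((A + B - 16) / (A - B)) →
      ∀ u : ℕ → ℝ, u 0 = μ₀ → (∀ k, u (k + 1) = F A B (u k)) →
        ∃ k, (1 + u k) / 2 ≥ (1 + Real.sqrt ((A + B - 16) / (A - B)) / 2) / 2 := by
  have hABpos : 0 < A - B := by linarith
  have hratio : 0 < (A + B - 16) / (A - B) := div_pos (by linarith) hABpos
  set m := Real.sqrt ((A + B - 16) / (A - B)) with hmdef
  have hm : 0 < m := Real.sqrt_pos.mpr hratio
  have hm2 : m ^ 2 = (A + B - 16) / (A - B) := Real.sq_sqrt hratio.le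
  have hm2' : m ^ 2 * (A - B) = A + B - 16 := by
    rw [hm2]; field_simp
  refine ⟨hm, by linarith, ?_⟩
  intro μ₀ hμ₀ hμ₀m u hu0 hrec
  set c : ℝ := 1 + 3 * (m ^ 2 * (A - B)) / 64 with hcdef
  have hmAB : 0 < m ^ 2 * (A - B) := by positivity
  have hc1 : 1 < c := by rw [hcdef]; linarith
  have hc0 : 0 < c := by linarith
  -- if ever `u k ≥ m/2`, we are done
  have key : ∀ n, (∃ k, u k ≥ m / 2) ∨ (0 < u n ∧ c ^ n * μ₀ ≤ u n) := by
    intro n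
    induction n with
    | zero => right; rw [hu0]; simpa using hμ₀
    | succ n ih =>
      rcases ih with h | ⟨hpos, hge⟩
      · exact Or.inl h
      rcases le_or_gt (m / 2) (u n) with h | h
      · exact Or.inl ⟨n, h⟩
      right
      have hF : c * u n ≤ F A B (u n) := by
        have hsq : (u n) ^ 2 ≤ (m / 2) ^ 2 := by nlinarith
        unfold F
        rw [hcdef]
        nlinarith [mul_pos hABpos hpos, mul_le_mul_of_nonneg_left hsq hABpos.le]
      rw [hrec n]
      constructor
      · have : 0 < c * u n := mul_pos hc0 hpos
        linarith
      · calc c ^ (n + 1) * μ₀ = c * (c ^ n * μ₀) := by ring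
          _ ≤ c * u n := by
            have := mul_le_mul_of_nonneg_left hge hc0.le
            linarith
          _ ≤ F A B (u n) := hF
  -- pick n with c^n * μ₀ ≥ m/2
  obtain ⟨n, hn⟩ := pow_unbounded_of_one_lt (m / 2 / μ₀) hc1
  rcases key n with ⟨k, hk⟩ | ⟨hpos, hge⟩
  · exact ⟨k, by linarith⟩
  · refine ⟨n, ?_⟩
    have : m / 2 < c ^ n * μ₀ := by
      rw [div_lt_iff₀ hμ₀] at hn; linarith
    linarith
end

section
/- Let η₀₀, η₀₁, η₁₀, η₁₁ and p be real numbers, and let μ := 2p − 1. Then Σ_{α,β,γ,δ,ε ∈ {0,1}} p^{3−α−β−γ}·(1−p)^{α+β+γ}·(1 + (−1)^{Maj(α,β,γ)}·η_{δ, β⊕γ⊕ε}·η_{ε, α⊕β⊕δ})/8 = (1 + F(μ))/2, where F(μ) = (μ/16)·(A + B − μ²·(A − B)). In other words, one step of the recursive protocol maps the bias μ_k to μ_{k+1} = F(μ_k). -/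
open Finset


/-- The majority function on three bits: outputs `1` iff at least two of the
three input bits are `1`. -/
def Maj (α β γ : ZMod 2) : ZMod 2 := if 2 ≤ α.val + β.val + γ.val then 1 else 0

/-- One step of the recursive protocol maps the bias `μ = 2p − 1` to `F(μ)`:
`Σ_{α,β,γ,δ,ε} p^{3−α−β−γ}(1−p)^{α+β+γ}
  (1 + (−1)^{Maj(α,β,γ)} η_{δ,β⊕γ⊕ε} η_{ε,α⊕β⊕δ})/8 = (1 + F(μ))/2`
with `F(μ) = (μ/16)(A + B − μ²(A − B))`, where
`A = (η₀₀+η₀₁+η₁₀+η₁₁)²` and `B = 2η₀₀² + 4η₀₁η₁₀ + 2η₁₁²`. -/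
theorem stmt_11 (η : ZMod 2 → ZMod 2 → ℝ) (p : ℝ) :
    (∑ α : ZMod 2, ∑ β : ZMod 2, ∑ γ : ZMod 2, ∑ δ : ZMod 2, ∑ ε : ZMod 2,
      p ^ (3 - (α.val + β.val + γ.val)) * (1 - p) ^ (α.val + β.val + γ.val) *
        (1 + (-1 : ℝ) ^ (Maj α β γ).val * η δ (β + γ + ε) * η ε (α + β + δ)) / 8)
    = (1 + (2 * p - 1) / 16 *
        ((η 0 0 + η 0 1 + η 1 0 + η 1 1) ^ 2 +
         (2 * (η 0 0) ^ 2 + 4 * η 0 1 * η 1 0 + 2 * (η 1 1) ^ 2) -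
         (2 * p - 1) ^ 2 *
           ((η 0 0 + η 0 1 + η 1 0 + η 1 1) ^ 2 -
            (2 * (η 0 0) ^ 2 + 4 * η 0 1 * η 1 0 + 2 * (η 1 1) ^ 2)))) / 2 := by
  simp only [show (Finset.univ : Finset (ZMod 2)) = {0,1} by decide, Finset.sum_insert, Finset.mem_singleton, Finset.sum_singleton]
  norm_num [Maj, ZMod.val_one, ZMod.val_zero, show ((2:ZMod 2))=0 by decide, show ((3:ZMod 2))=1 by decide]
  simp only [show ((2:ZMod 2))=0 by decide, show ((3:ZMod 2))=1 by decide]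
  ring
end

section
/- Let σ ≥ 0 be a real number and suppose η₀₀ = η₀₁ = η₁₀ = η₁₁ = σ (the isotropic boxes on the PR–I axis). Then A + B > 16 if and only if σ > √(2/3), i.e. if and only if the winning probability (1+σ)/2 at the CHSH game exceeds (3 + √6)/6. -/
/-- For isotropic boxes with all four biases equal to `σ ≥ 0` (the `PR`–`I`
axis), `A + B > 16` iff `σ > √(2/3)` iff the `CHSH` winning probability
`(1+σ)/2` exceeds `(3+√6)/6`. -/
theorem stmt_16 (σ η₀₀ η₀₁ η₁₀ η₁₁ : ℝ) (hσ : 0 ≤ σ)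
    (h₀₀ : η₀₀ = σ) (h₀₁ : η₀₁ = σ) (h₁₀ : η₁₀ = σ) (h₁₁ : η₁₁ = σ) :
    ((η₀₀ + η₀₁ + η₁₀ + η₁₁) ^ 2 +
        (2 * η₀₀ ^ 2 + 4 * η₀₁ * η₁₀ + 2 * η₁₁ ^ 2) > 16 ↔
      σ > Real.sqrt (2 / 3)) ∧
    (σ > Real.sqrt (2 / 3) ↔ (1 + σ) / 2 > (3 + Real.sqrt 6) / 6) := by
  rw [h₀₀, h₀₁, h₁₀, h₁₁]
  have hkey : σ > Real.sqrt (2 / 3) ↔ 2 / 3 < σ ^ 2 := by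
    rcases hσ.lt_or_eq with h | h
    · exact Real.sqrt_lt' h
    · constructor <;> intro hh <;> nlinarith [Real.sqrt_nonneg (2/3:ℝ)]
  have hs : Real.sqrt (2 / 3) = Real.sqrt 6 / 3 := by
    rw [show (2:ℝ)/3 = 6/9 by norm_num, Real.sqrt_div' 6 (by norm_num),
      show (9:ℝ) = 3 ^ 2 by norm_num, Real.sqrt_sq (by norm_num)]
  constructor
  · rw [hkey]; constructor <;> intro h <;> nlinarith
  · rw [hs]; constructor <;> intro h <;> linarith
end
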